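/- Let A be a non-unital C*-algebra and let φ ∈ A*_+. Let φ~ denote the norm-preserving positive extension of φ to the unitization A~, defined by φ~(a + λ1) := φ(a) + λ‖φ‖ for a ∈ A and λ ∈ ℂ. Then φ is maximally mixed (as a functional on A) if and only if φ~ is maximally mixed (as a functional on A~). -/

import Mathlib

/-! For `c ∈ ℂ` write `ρ_c(a + λ1) := ρ(a) + λc` for the extension of `ρ ∈ A*` to `A~`. Since
`u(a + λ1)u* = uau* + λ1` for a unitary `u`, conjugation commutes with `ρ ↦ ρ_c`, and `ρ ↦ ρ_c`
as well as restriction `A~* → A*` are weak*-continuous affine maps, so they carry Dixmier sets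
into Dixmier sets. Every element of `D_{A~}(ρ_c)` still takes the value `c` at `1`, hence
`D_{A~}(ρ_c) = {ψ_c : ψ ∈ D_A(ρ)}`, and maximal mixedness transfers because `ψ ↦ ψ_c` is
injective. -/

open scoped ComplexOrder Pointwise

noncomputable section

variable (A : Type*) [CStarAlgebra A]

/-- The functional `uφu* : x ↦ φ (u * x * star u)`. -/
def conjF (u : A) (φ : A →L[ℂ] ℂ) : A →L[ℂ] ℂ :=
  φ.comp (ContinuousLinearMap.mulLeftRight ℂ A u (star u))

/-- The weak*-closure of a set of continuous linear functionals. -/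
def wsClosure (S : Set (A →L[ℂ] ℂ)) : Set (A →L[ℂ] ℂ) :=
  StrongDual.toWeakDual ⁻¹' closure (StrongDual.toWeakDual '' S)

/-- The Dixmier set `D_A(φ, V)`: the weak*-closed convex hull of `{uφu* : u ∈ V}`. -/
def DixF (V : Set A) (φ : A →L[ℂ] ℂ) : Set (A →L[ℂ] ℂ) :=
  wsClosure A (convexHull ℝ ((fun u => conjF A u φ) '' V))

/-- The Dixmier set `D_A(a, V)`: the norm-closed convex hull of `{uau* : u ∈ V}`. -/
def DixE (V : Set A) (a : A) : Set A :=
  closure (convexHull ℝ ((fun u => u * a * star u) '' V))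

/-- The Dixmier set `D_A(φ)` (conjugation by the full unitary group `U(A)`). -/
def Dix (φ : A →L[ℂ] ℂ) : Set (A →L[ℂ] ℂ) := DixF A (unitary A : Set A) φ

/-- A functional is maximally mixed if `φ ∈ D_A(ψ)` for every `ψ ∈ D_A(φ)`. -/
def MaxMixed (φ : A →L[ℂ] ℂ) : Prop := ∀ ψ ∈ Dix A φ, φ ∈ Dix A ψ

/-- Positive functionals: `φ(x*x) ≥ 0` for all `x`. -/
def IsPos (φ : A →L[ℂ] ℂ) : Prop := ∀ x : A, 0 ≤ φ (star x * x)

/-- States: positive functionals with `φ(1) = 1`. -/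
def IsState (φ : A →L[ℂ] ℂ) : Prop := IsPos A φ ∧ φ 1 = 1

/-- Tracial functionals: `φ(xy) = φ(yx)`. -/
def IsTracial (φ : A →L[ℂ] ℂ) : Prop := ∀ x y : A, φ (x * y) = φ (y * x)

open scoped ComplexOrder Pointwise

noncomputable section

variable (B : Type*) [NonUnitalCStarAlgebra B]

/-- `snd : Unitization ℂ B → B` as a continuous linear map. -/
def sndCLM : Unitization ℂ B →L[ℂ] B :=
  { Unitization.sndHom ℂ ℂ B with
    cont := continuous_snd.comp Unitization.uniformEquivProd.continuous }

/-- `inr : B → Unitization ℂ B` as a continuous linear map. -/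
def inrCLM : B →L[ℂ] Unitization ℂ B :=
  { Unitization.inrHom ℂ ℂ B with cont := Unitization.continuous_inr }

/-- The functional `uφv : x ↦ φ (u * x * v)` on `B`, for `u, v` in the minimal
unitization `B~ := Unitization ℂ B`.  The product `u * x * v` is computed in `B~`;
it lies in (the canonical image of) the ideal `B` there, and is evaluated by `φ`
via the projection `snd` onto `B`. -/
def conj2 (u v : Unitization ℂ B) (φ : B →L[ℂ] ℂ) : B →L[ℂ] ℂ :=
  ((φ.comp (sndCLM B)).comp
    (ContinuousLinearMap.mulLeftRight ℂ (Unitization ℂ B) u v)).comp (inrCLM B)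

/-- The weak*-closure of a set of continuous linear functionals. -/
def wsClosureNU (S : Set (B →L[ℂ] ℂ)) : Set (B →L[ℂ] ℂ) :=
  StrongDual.toWeakDual ⁻¹' closure (StrongDual.toWeakDual '' S)

/-- The Dixmier set `D_B(φ)` of a functional: the weak*-closed convex hull of the set
`{uφu* : u ∈ U(B~)}` of conjugates of `φ` by unitaries of the minimal unitization. -/
def DixNU (φ : B →L[ℂ] ℂ) : Set (B →L[ℂ] ℂ) :=
  wsClosureNU B (convexHull ℝ
    ((fun u : Unitization ℂ B => conj2 B u (star u) φ) ''
      (unitary (Unitization ℂ B) : Set (Unitization ℂ B))))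

/-- A functional is maximally mixed if `φ ∈ D_B(ψ)` for every `ψ ∈ D_B(φ)`. -/
def MaxMixedNU (φ : B →L[ℂ] ℂ) : Prop := ∀ ψ ∈ DixNU B φ, φ ∈ DixNU B ψ

/-- Positive functionals: `φ(x*x) ≥ 0` for all `x`. -/
def IsPosNU (φ : B →L[ℂ] ℂ) : Prop := ∀ x : B, 0 ≤ φ (star x * x)

/-- `fst : Unitization ℂ B → ℂ` as a continuous linear map. -/
def fstCLM (B : Type*) [NonUnitalCStarAlgebra B] : Unitization ℂ B →L[ℂ] ℂ :=
  { toFun := fun x => x.fst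
    map_add' := fun _ _ => rfl
    map_smul' := fun _ _ => rfl
    cont := continuous_fst.comp Unitization.uniformEquivProd.continuous }

/-- The norm-preserving positive extension `φ~` of `φ` to the unitization:
`φ~(a + λ1) = φ(a) + λ‖φ‖`. -/
def extF (B : Type*) [NonUnitalCStarAlgebra B] (φ : B →L[ℂ] ℂ) :
    Unitization ℂ B →L[ℂ] ℂ :=
  φ.comp (sndCLM B) + ‖φ‖ • fstCLM B


open StrongDual

section WeakStar

variable {X Y : Type*} [AddCommGroup X] [TopologicalSpace X] [Module ℂ X]
  [AddCommGroup Y] [TopologicalSpace Y] [Module ℂ Y]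

theorem comp_add_mem_weakStarClosure_convexHull (g : X →L[ℂ] Y) (v : StrongDual ℂ X)
    {S : Set (StrongDual ℂ Y)} {T : Set (StrongDual ℂ X)} (hST : ∀ θ ∈ S, θ.comp g + v ∈ T)
    {θ : StrongDual ℂ Y} (hθ : θ ∈ toWeakDual ⁻¹' closure (toWeakDual '' convexHull ℝ S)) :
    θ.comp g + v ∈ toWeakDual ⁻¹' closure (toWeakDual '' convexHull ℝ T) := by
  let F : StrongDual ℂ Y →ᵃ[ℝ] StrongDual ℂ X :=
    ((ContinuousLinearMap.precomp ℂ g).toLinearMap.restrictScalars ℝ).toAffineMap +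
      AffineMap.const ℝ _ v
  have hcont : Continuous fun θ : WeakDual ℂ Y => toWeakDual (F (WeakDual.toStrongDual θ)) :=
    WeakDual.continuous_of_continuous_eval fun x =>
      show Continuous fun θ : WeakDual ℂ Y => θ (g x) + v x from
        (WeakDual.eval_continuous (g x)).add continuous_const
  have hhull : F '' convexHull ℝ S ⊆ convexHull ℝ T := by
    rw [F.image_convexHull]
    exact convexHull_mono (Set.image_subset_iff.2 hST)
  rw [Set.mem_preimage]
  refine closure_mono ?_ (image_closure_subset_closure_image hcont ⟨_, hθ, rfl⟩)
  rintro _ ⟨_, ⟨ψ, hψ, rfl⟩, rfl⟩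
  exact ⟨F ψ, hhull ⟨ψ, hψ, rfl⟩, rfl⟩

end WeakStar

theorem apply_one_of_mem_Dix {A : Type*} [CStarAlgebra A] {ρ θ : A →L[ℂ] ℂ}
    (h : θ ∈ Dix A ρ) : θ 1 = ρ 1 := by
  have hconv : Convex ℝ {θ : A →L[ℂ] ℂ | θ 1 = ρ 1} :=
    convex_hyperplane ⟨fun _ _ => rfl, fun _ _ => rfl⟩ _
  have hconj : (fun u => conjF A u ρ) '' unitary A ⊆ {θ | θ 1 = ρ 1} := by
    rintro _ ⟨u, hu, rfl⟩
    simp [conjF, Unitary.mul_star_self_of_mem hu]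
  have hclosed : IsClosed {θ : WeakDual ℂ A | θ 1 = ρ 1} :=
    isClosed_eq (WeakDual.eval_continuous 1) continuous_const
  exact closure_minimal (Set.image_subset_iff.2 (convexHull_min hconj hconv)) hclosed h

section Unitization

variable {B}

@[simp]
theorem inrCLM_apply (a : B) : inrCLM B a = a :=
  rfl

@[simp]
theorem sndCLM_apply (x : Unitization ℂ B) : sndCLM B x = x.snd :=
  rfl

def extendConst (c : ℂ) (ψ : B →L[ℂ] ℂ) : Unitization ℂ B →L[ℂ] ℂ :=
  ψ.comp (sndCLM B) + c • fstCLM B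

@[simp]
theorem extendConst_apply (c : ℂ) (ψ : B →L[ℂ] ℂ) (x : Unitization ℂ B) :
    extendConst c ψ x = ψ x.snd + c * x.fst :=
  rfl

theorem extF_eq_extendConst (φ : B →L[ℂ] ℂ) : extF B φ = extendConst (‖φ‖ : ℂ) φ := by
  ext x
  simp [extF, extendConst, ← Complex.coe_smul]

theorem extendConst_comp_inrCLM (c : ℂ) (ψ : B →L[ℂ] ℂ) :
    (extendConst c ψ).comp (inrCLM B) = ψ := by
  ext a
  simp

theorem extendConst_comp_inrCLM_of_apply_one {c : ℂ} {θ : Unitization ℂ B →L[ℂ] ℂ}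
    (h : θ 1 = c) : extendConst c (θ.comp (inrCLM B)) = θ := by
  ext x
  conv_rhs => rw [← Unitization.inl_fst_add_inr_snd_eq x]
  simp [← h, ← Unitization.algebraMap_eq_inl, Algebra.algebraMap_eq_smul_one, mul_comm, add_comm]

theorem extendConst_injective (c : ℂ) : Function.Injective (extendConst (B := B) c) :=
  fun ψ ψ' h => by rw [← extendConst_comp_inrCLM c ψ, h, extendConst_comp_inrCLM]

theorem conj2_comp_inrCLM (u v : Unitization ℂ B) (θ : Unitization ℂ B →L[ℂ] ℂ) :
    conj2 B u v (θ.comp (inrCLM B)) =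
      (θ.comp (ContinuousLinearMap.mulLeftRight ℂ _ u v)).comp (inrCLM B) := by
  ext a
  have hfst : (u * (a : Unitization ℂ B) * v).fst = 0 := by simp [Unitization.fst_mul]
  have hmem : ((u * (a : Unitization ℂ B) * v).snd : Unitization ℂ B) = u * a * v := by
    conv_rhs => rw [← Unitization.inl_fst_add_inr_snd_eq (u * (a : Unitization ℂ B) * v), hfst]
    simp
  simp only [conj2, ContinuousLinearMap.comp_apply, ContinuousLinearMap.mulLeftRight_apply,
    inrCLM_apply, sndCLM_apply, hmem]

theorem conjF_extendConst (c : ℂ) {u : Unitization ℂ B} (hu : u ∈ unitary (Unitization ℂ B))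
    (ψ : B →L[ℂ] ℂ) :
    conjF (Unitization ℂ B) u (extendConst c ψ) = extendConst c (conj2 B u (star u) ψ) := by
  ext x
  have hconj : u * x * star u = u * (x.snd : Unitization ℂ B) * star u + x.fst • 1 := by
    conv_lhs => rw [← Unitization.inl_fst_add_inr_snd_eq x]
    rw [← Unitization.algebraMap_eq_inl, Algebra.algebraMap_eq_smul_one]
    simp [mul_add, add_mul, Unitary.mul_star_self_of_mem hu, add_comm]
  simp [conjF, conj2, hconj, Unitization.fst_mul]

theorem comp_inrCLM_mem_DixNU {ρ θ : Unitization ℂ B →L[ℂ] ℂ}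
    (h : θ ∈ Dix (Unitization ℂ B) ρ) : θ.comp (inrCLM B) ∈ DixNU B (ρ.comp (inrCLM B)) := by
  rw [← add_zero (θ.comp _)]
  refine comp_add_mem_weakStarClosure_convexHull (inrCLM B) 0 ?_ h
  rintro _ ⟨u, hu, rfl⟩
  exact ⟨u, hu, (conj2_comp_inrCLM u (star u) ρ).trans (add_zero _).symm⟩

theorem extendConst_mem_Dix (c : ℂ) {ρ ψ : B →L[ℂ] ℂ} (h : ψ ∈ DixNU B ρ) :
    extendConst c ψ ∈ Dix (Unitization ℂ B) (extendConst c ρ) := by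
  refine comp_add_mem_weakStarClosure_convexHull (sndCLM B) (c • fstCLM B) ?_ h
  rintro _ ⟨u, hu, rfl⟩
  exact ⟨u, hu, conjF_extendConst c hu ρ⟩

theorem Dix_extendConst (c : ℂ) (ρ : B →L[ℂ] ℂ) :
    Dix (Unitization ℂ B) (extendConst c ρ) = extendConst c '' DixNU B ρ := by
  refine subset_antisymm (fun θ hθ => ⟨θ.comp (inrCLM B), ?_, ?_⟩)
    (Set.image_subset_iff.2 fun _ => extendConst_mem_Dix c)
  · simpa [extendConst_comp_inrCLM] using comp_inrCLM_mem_DixNU hθ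
  · exact extendConst_comp_inrCLM_of_apply_one ((apply_one_of_mem_Dix hθ).trans (by simp))

theorem maxMixed_extendConst_iff (c : ℂ) (φ : B →L[ℂ] ℂ) :
    MaxMixed (Unitization ℂ B) (extendConst c φ) ↔ MaxMixedNU B φ := by
  simp only [MaxMixed, MaxMixedNU, Dix_extendConst, Set.forall_mem_image,
    (extendConst_injective c).mem_set_image]

end Unitization

theorem stmt9_general (A : Type*) [NonUnitalCStarAlgebra A] (φ : A →L[ℂ] ℂ) :
    MaxMixedNU A φ ↔ MaxMixed (Unitization ℂ A) (extF A φ) := by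
  rw [extF_eq_extendConst, maxMixed_extendConst_iff]

/-- Let `A` be a non-unital C*-algebra and `φ ∈ A*₊`.  Then `φ` is
maximally mixed on `A` if and only if its norm-preserving positive extension `φ~` to
the unitization `A~` is maximally mixed on `A~`. -/
theorem stmt9 (A : Type*) [NonUnitalCStarAlgebra A]
    (hnu : ¬∃ e : A, ∀ x : A, e * x = x ∧ x * e = x)
    (φ : A →L[ℂ] ℂ) (hφ : IsPosNU A φ) :
    MaxMixedNU A φ ↔ MaxMixed (Unitization ℂ A) (extF A φ) :=
  stmt9_general A φ
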